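/- arXiv:1711.10065 — 2 statements merged into one kernel-verified Lean document; each statement's English description precedes it below -/
import Mathlib

section
/- For x ≥ 0 and t ≥ 0, define φ_t(x) = ϖ₊ + (x − ϖ₊)·(ϖ₊ − ϖ₋)e^{−λt} / ((ϖ₊ − ϖ₋)e^{−λt} + (x − ϖ₋)(1 − e^{−λt})). Then for every x ≥ 0, t ↦ φ_t(x) is differentiable, φ_0(x) = x, and ∂_t φ_t(x) = 2Aφ_t(x) + R − Sφ_t(x)² for all t ≥ 0. -/
/-!
`φ_t` is the Möbius flow with fixed points `ϖ₊` and `ϖ₋`: in the coordinate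
`(y - ϖ₊) / (y - ϖ₋)` it is multiplication by `e^{-λt}`. Differentiating the closed form gives
`∂_t φ = -(λ / (ϖ₊ - ϖ₋)) (φ - ϖ₊)(φ - ϖ₋)`, which is `Λ(φ)` because `λ = S (ϖ₊ - ϖ₋)` and
`Λ(y) = -S (y - ϖ₊)(y - ϖ₋)`. For `t ≥ 0` the denominator is a convex combination of
`ϖ₊ - ϖ₋ > 0` and `x - ϖ₋ > 0`, so it never vanishes.
-/

noncomputable def lam (A R S : ℝ) : ℝ := 2 * Real.sqrt (A ^ 2 + R * S)

noncomputable def wplus (A R S : ℝ) : ℝ := (A + lam A R S / 2) / S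

noncomputable def wminus (A R S : ℝ) : ℝ := (A - lam A R S / 2) / S

/-- The closed-form Riccati semigroup `φ_t(x)`. -/
noncomputable def phi (A R S t x : ℝ) : ℝ :=
  wplus A R S +
    (x - wplus A R S) * ((wplus A R S - wminus A R S) * Real.exp (-(lam A R S) * t)) /
      ((wplus A R S - wminus A R S) * Real.exp (-(lam A R S) * t) +
        (x - wminus A R S) * (1 - Real.exp (-(lam A R S) * t)))

/-- `ϖ = 1 - ϖ₊/ϖ₋`. -/
noncomputable def vpi (A R S : ℝ) : ℝ := 1 - wplus A R S / wminus A R S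

open Real

noncomputable def riccatiFlowDenom (l p m x t : ℝ) : ℝ :=
  (p - m) * exp (-l * t) + (x - m) * (1 - exp (-l * t))

noncomputable def riccatiFlow (l p m x t : ℝ) : ℝ :=
  p + (x - p) * ((p - m) * exp (-l * t)) / riccatiFlowDenom l p m x t

section RiccatiFlow

variable {l p m x t : ℝ}

theorem riccatiFlow_zero (hpm : p ≠ m) : riccatiFlow l p m x 0 = x := by
  have hpm' : p - m ≠ 0 := sub_ne_zero.mpr hpm
  simp only [riccatiFlow, riccatiFlowDenom, mul_zero, exp_zero, sub_self, add_zero, mul_one]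
  field_simp
  ring

theorem riccatiFlowDenom_pos (hmp : m < p) (hmx : m ≤ x) (hl : 0 ≤ l) (ht : 0 ≤ t) :
    0 < riccatiFlowDenom l p m x t :=
  add_pos_of_pos_of_nonneg (mul_pos (sub_pos.mpr hmp) (exp_pos _))
    (mul_nonneg (sub_nonneg.mpr hmx) (sub_nonneg.mpr (exp_le_one_iff.mpr (by nlinarith))))

theorem hasDerivAt_riccatiFlow {S : ℝ} (hl : l = S * (p - m))
    (hD : riccatiFlowDenom l p m x t ≠ 0) :
    HasDerivAt (riccatiFlow l p m x)
      (-S * (riccatiFlow l p m x t - p) * (riccatiFlow l p m x t - m)) t := by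
  have hexp : HasDerivAt (fun s => exp (-l * s)) (exp (-l * t) * -l) t := by
    simpa using ((hasDerivAt_id t).const_mul (-l)).exp
  have hnum := (hexp.const_mul (p - m)).const_mul (x - p)
  have hden : HasDerivAt (riccatiFlowDenom l p m x)
      ((p - m) * (exp (-l * t) * -l) + (x - m) * -(exp (-l * t) * -l)) t :=
    (hexp.const_mul (p - m)).add ((hexp.const_sub 1).const_mul (x - m))
  refine ((hnum.div hden hD).const_add p).congr_deriv ?_
  have hD_def : riccatiFlowDenom l p m x t =
      (p - m) * exp (-l * t) + (x - m) * (1 - exp (-l * t)) := rfl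
  simp only [riccatiFlow]
  generalize riccatiFlowDenom l p m x t = D at *
  generalize exp (-l * t) = E at *
  subst hl D
  field_simp
  ring

end RiccatiFlow

section Roots

variable {A R S : ℝ}

theorem phi_eq_riccatiFlow (t x : ℝ) :
    phi A R S t x = riccatiFlow (lam A R S) (wplus A R S) (wminus A R S) x t :=
  rfl

theorem lam_pos (h : 0 < A ^ 2 + R * S) : 0 < lam A R S := by
  unfold lam
  positivity

theorem lam_eq_mul_wplus_sub_wminus (hS : S ≠ 0) :
    lam A R S = S * (wplus A R S - wminus A R S) := by
  unfold wplus wminus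
  field_simp
  ring

theorem wminus_lt_wplus (hS : 0 < S) (h : 0 < A ^ 2 + R * S) : wminus A R S < wplus A R S := by
  have := lam_pos h
  unfold wplus wminus
  gcongr
  linarith

theorem wminus_neg (hR : 0 < R) (hS : 0 < S) : wminus A R S < 0 := by
  have hA : A < √(A ^ 2 + R * S) := lt_sqrt_of_sq_lt (by nlinarith [mul_pos hR hS])
  unfold wminus lam
  exact div_neg_of_neg_of_pos (by linarith) hS

theorem riccati_rhs_eq_neg_mul (hS : S ≠ 0) (h : 0 ≤ A ^ 2 + R * S) (y : ℝ) :
    2 * A * y + R - S * y ^ 2 = -S * (y - wplus A R S) * (y - wminus A R S) := by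
  have hsq : √(A ^ 2 + R * S) ^ 2 = A ^ 2 + R * S := sq_sqrt h
  unfold wplus wminus lam
  field_simp
  linear_combination -hsq

end Roots

theorem riccati_flow_solves_ode (A R S : ℝ) (hR : 0 < R) (hS : 0 < S)
    (x : ℝ) (hx : 0 ≤ x) :
    phi A R S 0 x = x ∧
      ∀ t : ℝ, 0 ≤ t →
        HasDerivAt (fun s => phi A R S s x)
          (2 * A * phi A R S t x + R - S * (phi A R S t x) ^ 2) t := by
  have hdisc : 0 < A ^ 2 + R * S := by positivity
  have hroots := wminus_lt_wplus hS hdisc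
  simp only [phi_eq_riccatiFlow]
  refine ⟨riccatiFlow_zero hroots.ne', fun t ht => ?_⟩
  have hden := riccatiFlowDenom_pos hroots (hx.trans' (wminus_neg hR hS).le) (lam_pos hdisc).le ht
  rw [riccati_rhs_eq_neg_mul hS.ne' hdisc.le]
  exact hasDerivAt_riccatiFlow (lam_eq_mul_wplus_sub_wminus hS.ne') hden.ne'
end

section
/- For every x ≥ 0 and t ≥ 0, the Riccati flow satisfies min(x, ϖ₊) ≤ φ_t(x) ≤ max(x, ϖ₊). In particular sup_{t≥0} φ_t(x) = max(x, ϖ₊). -/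
theorem riccati_flow_bounds (A R S : ℝ) (hR : 0 < R) (hS : 0 < S)
    (x : ℝ) (hx : 0 ≤ x) :
    (∀ t : ℝ, 0 ≤ t →
        min x (wplus A R S) ≤ phi A R S t x ∧ phi A R S t x ≤ max x (wplus A R S)) ∧
      IsLUB {y : ℝ | ∃ t : ℝ, 0 ≤ t ∧ y = phi A R S t x} (max x (wplus A R S)) := by
  have hAR : (0:ℝ) < A ^ 2 + R * S := by positivity
  set s := Real.sqrt (A ^ 2 + R * S) with hsdef
  have hs : s ^ 2 = A ^ 2 + R * S := Real.sq_sqrt hAR.le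
  have hs0 : 0 ≤ s := Real.sqrt_nonneg _
  have hRS : 0 < R * S := mul_pos hR hS
  have hgtA : A < s := by nlinarith [sq_nonneg (s - A), sq_nonneg (s + A)]
  have hgtA' : -A < s := by nlinarith [sq_nonneg (s - A), sq_nonneg (s + A)]
  have hl : 0 < lam A R S := by unfold lam; nlinarith
  have hwm : wminus A R S < 0 := div_neg_of_neg_of_pos (by unfold lam; rw [← hsdef]; linarith) hS
  have hwp : 0 < wplus A R S := div_pos (by unfold lam; rw [← hsdef]; linarith) hS
  have hD : 0 < wplus A R S - wminus A R S := by
    have h : wplus A R S - wminus A R S = lam A R S / S := by unfold wplus wminus; field_simp; ring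
    rw [h]; positivity
  set W := wplus A R S
  set V := wminus A R S
  have hxV : 0 < x - V := by linarith
  -- the main pointwise bound
  have hbound : ∀ t : ℝ, 0 ≤ t →
      min x W ≤ phi A R S t x ∧ phi A R S t x ≤ max x W := by
    intro t ht
    set e := Real.exp (-(lam A R S) * t) with hedef
    have he0 : 0 < e := Real.exp_pos _
    have he1 : e ≤ 1 := by
      rw [hedef, Real.exp_le_one_iff]
      nlinarith
    set Q := (W - V) * e + (x - V) * (1 - e) with hQdef
    have hQ : 0 < Q := by nlinarith [mul_pos hD he0, mul_nonneg hxV.le (by linarith : (0:ℝ) ≤ 1 - e)]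
    have hr1 : (W - V) * e ≤ Q := by nlinarith [mul_nonneg hxV.le (by linarith : (0:ℝ) ≤ 1 - e)]
    set r := (W - V) * e / Q with hrdef
    have hr0 : 0 < r := div_pos (mul_pos hD he0) hQ
    have hr1' : r ≤ 1 := (div_le_one hQ).mpr hr1
    have hphi : phi A R S t x = W + (x - W) * r := by
      rw [hrdef]; unfold phi
      rw [mul_div_assoc]
    rw [hphi]
    rcases le_total x W with h | h
    · rw [min_eq_left h, max_eq_right h]
      have h1 : (x - W) * 1 ≤ (x - W) * r :=
        mul_le_mul_of_nonpos_left hr1' (by linarith)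
      have h2 : (x - W) * r ≤ 0 :=
        mul_nonpos_of_nonpos_of_nonneg (by linarith) hr0.le
      constructor <;> linarith
    · rw [min_eq_right h, max_eq_left h]
      have h1 : (x - W) * r ≤ (x - W) * 1 :=
        mul_le_mul_of_nonneg_left hr1' (by linarith)
      have h2 : 0 ≤ (x - W) * r :=
        mul_nonneg (by linarith) hr0.le
      constructor <;> linarith
  refine ⟨hbound, ?_, ?_⟩
  · rintro y ⟨t, ht, rfl⟩
    exact (hbound t ht).2
  · intro b hb
    have hmem : ∀ t : ℝ, 0 ≤ t → phi A R S t x ≤ b := fun t ht => hb ⟨t, ht, rfl⟩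
    have h0 : phi A R S 0 x = x := by
      unfold phi
      rw [mul_zero, Real.exp_zero]
      rw [show (1:ℝ) - 1 = 0 by ring, mul_zero, add_zero, mul_one, mul_div_assoc,
        div_self hD.ne', mul_one]
      ring
    rcases le_total W x with h | h
    · rw [max_eq_left h]
      calc x = phi A R S 0 x := h0.symm
        _ ≤ b := hmem 0 le_rfl
    · rw [max_eq_right h]
      -- tendsto argument
      have he : Filter.Tendsto (fun t : ℝ => Real.exp (-(lam A R S) * t)) Filter.atTop (nhds 0) := by
        apply Real.tendsto_exp_atBot.comp
        have h1 : Filter.Tendsto (fun t : ℝ => lam A R S * t) Filter.atTop Filter.atTop :=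
          Filter.Tendsto.const_mul_atTop hl Filter.tendsto_id
        have h2 := Filter.tendsto_neg_atTop_atBot.comp h1
        refine h2.congr fun t => ?_
        show -(lam A R S * t) = -lam A R S * t
        ring
      have hne : (W - V) * 0 + (x - V) * (1 - 0) ≠ 0 := by
        rw [mul_zero, zero_add, sub_zero, mul_one]; exact hxV.ne'
      have htend : Filter.Tendsto (fun t : ℝ => phi A R S t x) Filter.atTop
          (nhds (W + (x - W) * ((W - V) * 0) / ((W - V) * 0 + (x - V) * (1 - 0)))) := by
        unfold phi
        exact tendsto_const_nhds.add
          (((tendsto_const_nhds.mul (tendsto_const_nhds.mul he)).div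
            ((tendsto_const_nhds.mul he).add
              (tendsto_const_nhds.mul (tendsto_const_nhds.sub he))) hne))
      have htend' : Filter.Tendsto (fun t : ℝ => phi A R S t x) Filter.atTop (nhds W) := by
        have : W + (x - W) * ((W - V) * 0) / ((W - V) * 0 + (x - V) * (1 - 0)) = W := by
          rw [mul_zero, zero_add, sub_zero, mul_one, mul_zero, zero_div, add_zero]
        rwa [this] at htend
      exact le_of_tendsto htend' (Filter.eventually_atTop.mpr ⟨0, fun t ht => hmem t ht⟩)
end
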